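/- arXiv:2007.03825 — 3 statements merged into one kernel-verified Lean document; each statement's English description precedes it below -/
import Mathlib

section
/- For any x, y ∈ ℝ⁴ with x ≠ 0, J(x)^T y = 0 if and only if y = k·x for some scalar k ∈ ℝ. -/
open Matrix

noncomputable def skew (u : Fin 3 → ℝ) : Matrix (Fin 3) (Fin 3) ℝ :=
  !![0, -u 2, u 1; u 2, 0, -u 0; -u 1, u 0, 0]

noncomputable def Jq (x : Fin 4 → ℝ) : Matrix (Fin 4) (Fin 3) ℝ :=
  Matrix.of (Fin.cons (fun j => -x j.succ)
    (fun i => (x 0 • (1 : Matrix (Fin 3) (Fin 3) ℝ) + skew (fun k => x k.succ)) i))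

theorem stmt1 (x y : Fin 4 → ℝ) (hx : x ≠ 0) :
    (Jq x)ᵀ *ᵥ y = 0 ↔ ∃ k : ℝ, y = k • x := by
  have hN : x 0 ^ 2 + x 1 ^ 2 + x 2 ^ 2 + x 3 ^ 2 ≠ 0 := by
    intro h
    apply hx
    have h0 : x 0 = 0 := by nlinarith [sq_nonneg (x 0), sq_nonneg (x 1), sq_nonneg (x 2), sq_nonneg (x 3)]
    have h1 : x 1 = 0 := by nlinarith [sq_nonneg (x 0), sq_nonneg (x 1), sq_nonneg (x 2), sq_nonneg (x 3)]
    have h2 : x 2 = 0 := by nlinarith [sq_nonneg (x 0), sq_nonneg (x 1), sq_nonneg (x 2), sq_nonneg (x 3)]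
    have h3 : x 3 = 0 := by nlinarith [sq_nonneg (x 0), sq_nonneg (x 1), sq_nonneg (x 2), sq_nonneg (x 3)]
    funext i
    fin_cases i <;> simp [h0, h1, h2, h3]
  constructor
  · intro h
    have e0 := congrFun h 0
    have e1 := congrFun h 1
    have e2 := congrFun h 2
    simp [Jq, skew, Matrix.mulVec, dotProduct, Matrix.transpose_apply, Fin.sum_univ_succ,
      Matrix.add_apply, Matrix.smul_apply, Matrix.one_apply,
      show (Fin.succ 0 : Fin 4) = 1 from rfl, show (Fin.succ 1 : Fin 4) = 2 from rfl,
      show (Fin.succ 2 : Fin 4) = 3 from rfl] at e0 e1 e2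
    refine ⟨(x 0 * y 0 + x 1 * y 1 + x 2 * y 2 + x 3 * y 3) /
      (x 0 ^ 2 + x 1 ^ 2 + x 2 ^ 2 + x 3 ^ 2), ?_⟩
    funext i
    have m0 : (⟨0, by omega⟩ : Fin 4) = 0 := rfl
    have m1 : (⟨1, by omega⟩ : Fin 4) = 1 := rfl
    have m2 : (⟨2, by omega⟩ : Fin 4) = 2 := rfl
    have m3 : (⟨3, by omega⟩ : Fin 4) = 3 := rfl
    fin_cases i <;> simp only [m0, m1, m2, m3, Pi.smul_apply, smul_eq_mul] <;>
      rw [div_mul_eq_mul_div, eq_div_iff hN]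
    · linear_combination (-x 1) * e0 + (-x 2) * e1 + (-x 3) * e2
    · linear_combination (x 0) * e0 + (-x 3) * e1 + (x 2) * e2
    · linear_combination (x 3) * e0 + (x 0) * e1 + (-x 1) * e2
    · linear_combination (-x 2) * e0 + (x 1) * e1 + (x 0) * e2
  · rintro ⟨k, rfl⟩
    funext j
    fin_cases j <;>
      simp [Jq, skew, Matrix.mulVec, dotProduct, Matrix.transpose_apply, Fin.sum_univ_succ,
        Matrix.add_apply, Matrix.smul_apply, Matrix.one_apply,
        show (Fin.succ 0 : Fin 4) = 1 from rfl, show (Fin.succ 1 : Fin 4) = 2 from rfl,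
        show (Fin.succ 2 : Fin 4) = 3 from rfl] <;> ring
end

section
/- Let f : ℝⁿ × ℝ → ℝⁿ be continuously differentiable with forward-complete flow, and suppose there exist a symmetric positive-definite matrix M and λ > 0 such that J(x,t)^T M + M J(x,t) ≤ −2λM for all x and t ≥ t₀, where J(x,t) = ∂f/∂x. Then for any two solutions x(t), y(t) of ẋ = f(x,t), the M-weighted distance satisfies ((x(t)−y(t))^T M (x(t)−y(t)))^{1/2} ≤ ((x₀−y₀)^T M (x₀−y₀))^{1/2}·e^{−λ(t−t₀)} for all t ≥ t₀. -/
/-!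
The squared `M`-distance `V = (x - y)ᵀ M (x - y)` of two solutions satisfies `V' ≤ -2λ V`:
along the segment from `y t` to `x t`, the derivative of
`s ↦ f(y + s(x - y))ᵀ M (x - y) + (x - y)ᵀ M f(y + s(x - y))` is
`(x - y)ᵀ (Jᵀ M + M J) (x - y) ≤ -2λ V`, and its increment over `[0, 1]` is exactly `V'`.
Grönwall's inequality gives `V t ≤ V t₀ e^{-2λ(t - t₀)}`; take square roots.
-/

open Matrix

theorem Matrix.hasDerivAt_dotProduct_mulVec {m : Type*} [Fintype m] (M : Matrix m m ℝ)
    {a b : ℝ → m → ℝ} {a' b' : m → ℝ} {t : ℝ} (ha : HasDerivAt a a' t) (hb : HasDerivAt b b' t) :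
    HasDerivAt (fun s => a s ⬝ᵥ (M *ᵥ b s)) (a' ⬝ᵥ (M *ᵥ b t) + a t ⬝ᵥ (M *ᵥ b')) t := by
  have hMb : HasDerivAt (fun s => M *ᵥ b s) (M *ᵥ b') t := by
    simpa [Function.comp_def] using
      (mulVecLin M).toContinuousLinearMap.hasFDerivAt.comp_hasDerivAt t hb
  simpa [dotProduct, Finset.sum_add_distrib] using
    HasDerivAt.fun_sum fun i _ => (hasDerivAt_pi.mp ha i).mul (hasDerivAt_pi.mp hMb i)

theorem Matrix.dotProduct_mulVec_add_dotProduct_mulVec {m : Type*} [Fintype m]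
    (M A : Matrix m m ℝ) (v : m → ℝ) :
    (A *ᵥ v) ⬝ᵥ (M *ᵥ v) + v ⬝ᵥ (M *ᵥ (A *ᵥ v)) = v ⬝ᵥ ((Aᵀ * M + M * A) *ᵥ v) := by
  rw [add_mulVec, dotProduct_add, ← mulVec_mulVec, ← mulVec_mulVec, dotProduct_mulVec v Aᵀ,
    vecMul_transpose, dotProduct_comm (A *ᵥ v)]

theorem dotProduct_mulVec_increment_le_of_jacobian_le {m : Type*} [Fintype m]
    {g : (m → ℝ) → m → ℝ} {J : (m → ℝ) → Matrix m m ℝ} {M : Matrix m m ℝ} {c : ℝ}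
    (hg : ∀ z, HasFDerivAt g (mulVecLin (J z)).toContinuousLinearMap z)
    (hJ : ∀ z v, v ⬝ᵥ (((J z)ᵀ * M + M * J z) *ᵥ v) ≤ c * (v ⬝ᵥ (M *ᵥ v))) (a b : m → ℝ) :
    (g a - g b) ⬝ᵥ (M *ᵥ (a - b)) + (a - b) ⬝ᵥ (M *ᵥ (g a - g b)) ≤
      c * ((a - b) ⬝ᵥ (M *ᵥ (a - b))) := by
  set w := a - b
  set φ : ℝ → ℝ := fun s => g (b + s • w) ⬝ᵥ (M *ᵥ w) + w ⬝ᵥ (M *ᵥ g (b + s • w))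
  have hφ : ∀ s, HasDerivAt φ (w ⬝ᵥ (((J (b + s • w))ᵀ * M + M * J (b + s • w)) *ᵥ w)) s := by
    intro s
    have hseg : HasDerivAt (fun s : ℝ => b + s • w) w s := by
      simpa using ((hasDerivAt_id s).smul_const w).const_add b
    have hgs : HasDerivAt (fun s => g (b + s • w)) (J (b + s • w) *ᵥ w) s := by
      simpa [Function.comp_def] using (hg _).comp_hasDerivAt s hseg
    rw [← dotProduct_mulVec_add_dotProduct_mulVec]
    exact ((hasDerivAt_dotProduct_mulVec M hgs (hasDerivAt_const s w)).add
      (hasDerivAt_dotProduct_mulVec M (hasDerivAt_const s w) hgs)).congr_deriv (by simp)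
  have := image_sub_le_mul_sub_of_deriv_le (fun s => (hφ s).differentiableAt)
    (fun s => (hφ s).deriv ▸ hJ _ w) zero_le_one
  simp only [φ, w, zero_smul, one_smul, add_zero, add_sub_cancel, sub_zero, mul_one, mulVec_sub,
    dotProduct_sub, sub_dotProduct] at this ⊢
  linarith

theorem le_mul_exp_of_hasDerivAt_le_mul {V V' : ℝ → ℝ} {c t₀ : ℝ}
    (hV : ∀ t, t₀ ≤ t → HasDerivAt V (V' t) t) (hV' : ∀ t, t₀ ≤ t → V' t ≤ c * V t) {t : ℝ}
    (ht : t₀ ≤ t) : V t ≤ V t₀ * Real.exp (c * (t - t₀)) := by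
  have := le_gronwallBound_of_liminf_deriv_right_le (ε := 0)
    (fun s hs => (hV s hs.1).continuousAt.continuousWithinAt)
    (fun s hs r hr => (hV s hs.1).hasDerivWithinAt.liminf_right_slope_le hr)
    le_rfl (fun s hs => by simpa using hV' s hs.1) t ⟨ht, le_rfl⟩
  rwa [gronwallBound_ε0] at this

theorem stmt12_general (n : ℕ) (f : (Fin n → ℝ) → ℝ → Fin n → ℝ)
    (J : (Fin n → ℝ) → ℝ → Matrix (Fin n) (Fin n) ℝ)
    (hJ : ∀ x t, HasFDerivAt (fun y => f y t)
        (LinearMap.toContinuousLinearMap (Matrix.mulVecLin (J x t))) x)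
    (M : Matrix (Fin n) (Fin n) ℝ)
    (lam t₀ : ℝ)
    (hcontr : ∀ x t, t₀ ≤ t → ∀ v : Fin n → ℝ,
        v ⬝ᵥ (((J x t)ᵀ * M + M * J x t) *ᵥ v) ≤ -2 * lam * (v ⬝ᵥ (M *ᵥ v)))
    (x y : ℝ → Fin n → ℝ)
    (hx : ∀ t, t₀ ≤ t → HasDerivAt x (f (x t) t) t)
    (hy : ∀ t, t₀ ≤ t → HasDerivAt y (f (y t) t) t) :
    ∀ t, t₀ ≤ t →
      Real.sqrt ((x t - y t) ⬝ᵥ (M *ᵥ (x t - y t))) ≤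
        Real.sqrt ((x t₀ - y t₀) ⬝ᵥ (M *ᵥ (x t₀ - y t₀))) * Real.exp (-lam * (t - t₀)) := by
  intro T hT
  set V := fun t => (x t - y t) ⬝ᵥ (M *ᵥ (x t - y t))
  have hV : ∀ t, t₀ ≤ t → HasDerivAt V ((f (x t) t - f (y t) t) ⬝ᵥ (M *ᵥ (x t - y t)) +
      (x t - y t) ⬝ᵥ (M *ᵥ (f (x t) t - f (y t) t))) t := fun t ht =>
    hasDerivAt_dotProduct_mulVec M ((hx t ht).sub (hy t ht)) ((hx t ht).sub (hy t ht))
  have hdecay : V T ≤ V t₀ * Real.exp (-2 * lam * (T - t₀)) :=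
    le_mul_exp_of_hasDerivAt_le_mul hV
      (fun t ht => dotProduct_mulVec_increment_le_of_jacobian_le (hJ · t) (hcontr · t ht) _ _) hT
  calc Real.sqrt (V T) ≤ Real.sqrt (V t₀ * Real.exp (-2 * lam * (T - t₀))) :=
        Real.sqrt_le_sqrt hdecay
    _ = Real.sqrt (V t₀) * Real.exp (-lam * (T - t₀)) := by
        rw [Real.sqrt_mul' _ (Real.exp_pos _).le, ← Real.exp_half]
        ring_nf

theorem stmt12 (n : ℕ) (f : (Fin n → ℝ) → ℝ → Fin n → ℝ)
    (J : (Fin n → ℝ) → ℝ → Matrix (Fin n) (Fin n) ℝ)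
    (hf : ContDiff ℝ 1 (fun p : (Fin n → ℝ) × ℝ => f p.1 p.2))
    (hJ : ∀ x t, HasFDerivAt (fun y => f y t)
        (LinearMap.toContinuousLinearMap (Matrix.mulVecLin (J x t))) x)
    (M : Matrix (Fin n) (Fin n) ℝ) (hMpd : M.PosDef) (hMs : M.IsSymm)
    (lam t₀ : ℝ) (hlam : 0 < lam)
    (hcontr : ∀ x t, t₀ ≤ t → ∀ v : Fin n → ℝ,
        v ⬝ᵥ (((J x t)ᵀ * M + M * J x t) *ᵥ v) ≤ -2 * lam * (v ⬝ᵥ (M *ᵥ v)))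
    (x y : ℝ → Fin n → ℝ)
    (hx : ∀ t, t₀ ≤ t → HasDerivAt x (f (x t) t) t)
    (hy : ∀ t, t₀ ≤ t → HasDerivAt y (f (y t) t) t) :
    ∀ t, t₀ ≤ t →
      Real.sqrt ((x t - y t) ⬝ᵥ (M *ᵥ (x t - y t))) ≤
        Real.sqrt ((x t₀ - y t₀) ⬝ᵥ (M *ᵥ (x t₀ - y t₀))) * Real.exp (-lam * (t - t₀)) :=
  stmt12_general n f J hJ M lam t₀ hcontr x y hx hy
end

section
/- Suppose ‖q(t)‖ = ‖q_f(t)‖-related bounds hold: ‖q(t)‖ ≤ 1 and ‖q_f(t) − q(t)‖ ≤ ε_q for all t ≥ 0, and let K_o be symmetric positive definite with λ_min(K_o) − λ_max(K_o)·ε_q =: λ_o > 0. Then for all ξ ∈ ℝ³ and all t, the quadratic form satisfies ξ^T K_o J(q_f(t))^T J(q(t)) ξ ≥ λ_o ‖ξ‖², i.e., the Jacobian J_o = −(1/2)K_o J(q_f)^T J(q) satisfies ξ^T J_o ξ ≤ −(λ_o/2)‖ξ‖². -/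
/-!
As `K` is symmetric, `ξ ⬝ᵥ (K * J(f)ᵀ * J(a)) *ᵥ ξ = ⟪J(f) Kξ, J(a) ξ⟫`. Since `J` is linear and
`J(x)ᵀ J(x) = ‖x‖² I`, splitting `J(f) = J(a) + J(f - a)` leaves the main term
`⟪Kξ, ξ⟫ ≥ λ_min ‖ξ‖²` (as `‖a‖ = 1`) plus a cross term which Cauchy–Schwarz bounds by
`‖f - a‖ ‖Kξ‖ ‖ξ‖ ≤ ε λ_max ‖ξ‖²`.
-/

open Matrix

section RealQuadraticForm

variable {n : Type*} [Fintype n]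

theorem dotProduct_self_nonneg (v : n → ℝ) : 0 ≤ v ⬝ᵥ v := by
  simpa using dotProduct_star_self_nonneg v

theorem Matrix.PosSemidef.dotProduct_mulVec_sq_le {M : Matrix n n ℝ} (hM : M.PosSemidef)
    (x y : n → ℝ) : (x ⬝ᵥ M *ᵥ y) ^ 2 ≤ (x ⬝ᵥ M *ᵥ x) * (y ⬝ᵥ M *ᵥ y) := by
  let _ := M.toSeminormedAddCommGroup hM
  let _ := M.toInnerProductSpace hM
  have h := real_inner_mul_inner_self_le x y
  change (M *ᵥ y) ⬝ᵥ star x * ((M *ᵥ y) ⬝ᵥ star x) ≤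
    (M *ᵥ x) ⬝ᵥ star x * ((M *ᵥ y) ⬝ᵥ star y) at h
  simpa only [star_trivial, dotProduct_comm (M *ᵥ _), sq] using h

theorem dotProduct_sq_le (x y : n → ℝ) : (x ⬝ᵥ y) ^ 2 ≤ (x ⬝ᵥ x) * (y ⬝ᵥ y) := by
  classical
  simpa using PosSemidef.one.dotProduct_mulVec_sq_le x y

theorem Matrix.PosSemidef.mulVec_dotProduct_mulVec_le {M : Matrix n n ℝ} (hM : M.PosSemidef)
    {c : ℝ} (hc : ∀ v, v ⬝ᵥ M *ᵥ v ≤ c * (v ⬝ᵥ v)) (v : n → ℝ) :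
    (M *ᵥ v) ⬝ᵥ (M *ᵥ v) ≤ c ^ 2 * (v ⬝ᵥ v) := by
  set w := M *ᵥ v
  have hnonneg (u : n → ℝ) : 0 ≤ u ⬝ᵥ M *ᵥ u := by simpa using hM.dotProduct_mulVec_nonneg u
  have hw : w ⬝ᵥ w = v ⬝ᵥ M *ᵥ w := by
    rw [dotProduct_mulVec, ← mulVec_transpose, ← conjTranspose_eq_transpose_of_trivial,
      hM.isHermitian.eq, dotProduct_comm]
  have hcs : (w ⬝ᵥ w) ^ 2 ≤ (c ^ 2 * (v ⬝ᵥ v)) * (w ⬝ᵥ w) := calc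
    (w ⬝ᵥ w) ^ 2 ≤ (v ⬝ᵥ M *ᵥ v) * (w ⬝ᵥ M *ᵥ w) := hw ▸ hM.dotProduct_mulVec_sq_le v w
    _ ≤ (c * (v ⬝ᵥ v)) * (c * (w ⬝ᵥ w)) :=
      mul_le_mul (hc v) (hc w) (hnonneg w) ((hnonneg v).trans (hc v))
    _ = (c ^ 2 * (v ⬝ᵥ v)) * (w ⬝ᵥ w) := by ring
  have hbound : 0 ≤ c ^ 2 * (v ⬝ᵥ v) := mul_nonneg (sq_nonneg c) (dotProduct_self_nonneg v)
  generalize c ^ 2 * (v ⬝ᵥ v) = b at hcs hbound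
  nlinarith [dotProduct_self_nonneg w]

end RealQuadraticForm

theorem Jq_eq (x : Fin 4 → ℝ) :
    Jq x = !![-x 1, -x 2, -x 3; x 0, -x 3, x 2; x 3, x 0, -x 1; -x 2, x 1, x 0] := by
  ext i j
  induction i using Fin.cases with
  | zero => fin_cases j <;> rfl
  | succ i =>
    simp only [Jq, of_apply, Fin.cons_succ]
    fin_cases i <;> fin_cases j <;> simp [skew, one_apply]

theorem Jq_add (x y : Fin 4 → ℝ) : Jq (x + y) = Jq x + Jq y := by
  ext i j
  fin_cases i <;> fin_cases j <;> simp [Jq_eq] <;> ring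

theorem Jq_transpose_mul_self (x : Fin 4 → ℝ) : (Jq x)ᵀ * Jq x = (x ⬝ᵥ x) • 1 := by
  ext i j
  fin_cases i <;> fin_cases j <;>
    simp [Jq_eq, mul_apply, dotProduct, Fin.sum_univ_succ] <;> ring

theorem Jq_mulVec_dotProduct_Jq_mulVec (x : Fin 4 → ℝ) (u v : Fin 3 → ℝ) :
    (Jq x *ᵥ u) ⬝ᵥ (Jq x *ᵥ v) = (x ⬝ᵥ x) * (u ⬝ᵥ v) := by
  rw [dotProduct_mulVec, ← vecMul_transpose, vecMul_vecMul, Jq_transpose_mul_self,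
    vecMul_smul, vecMul_one, smul_dotProduct, smul_eq_mul]

theorem le_dotProduct_mul_Jq_transpose_mul_Jq_mulVec {K : Matrix (Fin 3) (Fin 3) ℝ}
    (hK : K.PosSemidef) {cmin cmax ε : ℝ} (hmin : ∀ v, cmin * (v ⬝ᵥ v) ≤ v ⬝ᵥ K *ᵥ v)
    (hmax : ∀ v, v ⬝ᵥ K *ᵥ v ≤ cmax * (v ⬝ᵥ v)) {a f : Fin 4 → ℝ} (ha : a ⬝ᵥ a = 1)
    (hf : √((f - a) ⬝ᵥ (f - a)) ≤ ε) (ξ : Fin 3 → ℝ) :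
    (cmin - cmax * ε) * (ξ ⬝ᵥ ξ) ≤ ξ ⬝ᵥ (K * (Jq f)ᵀ * Jq a) *ᵥ ξ := by
  obtain ⟨hε, he⟩ := Real.sqrt_le_iff.mp hf
  set e := f - a
  set w := K *ᵥ ξ
  set cross := (Jq e *ᵥ w) ⬝ᵥ (Jq a *ᵥ ξ)
  have hform : ξ ⬝ᵥ (K * (Jq f)ᵀ * Jq a) *ᵥ ξ = ξ ⬝ᵥ K *ᵥ ξ + cross := by
    have hKt : Kᵀ = K := by simpa using hK.isHermitian.eq
    rw [← mulVec_mulVec, ← mulVec_mulVec, dotProduct_mulVec, ← mulVec_transpose, hKt,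
      dotProduct_mulVec, vecMul_transpose, show f = a + e by simp [e], Jq_add, add_mulVec,
      add_dotProduct, Jq_mulVec_dotProduct_Jq_mulVec, ha, one_mul, dotProduct_comm]
  have hcross : cross ^ 2 ≤ (ε * (cmax * (ξ ⬝ᵥ ξ))) ^ 2 := calc
    cross ^ 2 ≤ ((Jq e *ᵥ w) ⬝ᵥ (Jq e *ᵥ w)) * ((Jq a *ᵥ ξ) ⬝ᵥ (Jq a *ᵥ ξ)) :=
      dotProduct_sq_le _ _
    _ = (e ⬝ᵥ e) * (w ⬝ᵥ w) * (ξ ⬝ᵥ ξ) := by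
      rw [Jq_mulVec_dotProduct_Jq_mulVec, Jq_mulVec_dotProduct_Jq_mulVec, ha, one_mul]
    _ ≤ ε ^ 2 * (cmax ^ 2 * (ξ ⬝ᵥ ξ)) * (ξ ⬝ᵥ ξ) := by
      have hξ := dotProduct_self_nonneg ξ
      gcongr
      · exact dotProduct_self_nonneg w
      · exact hK.mulVec_dotProduct_mulVec_le hmax ξ
    _ = (ε * (cmax * (ξ ⬝ᵥ ξ))) ^ 2 := by ring
  have hcmax : 0 ≤ cmax * (ξ ⬝ᵥ ξ) := by
    simpa using (hK.dotProduct_mulVec_nonneg ξ).trans (hmax ξ)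
  have hcross_ge := (abs_le_of_sq_le_sq' hcross (mul_nonneg hε hcmax)).1
  rw [hform]
  linear_combination hmin ξ + hcross_ge

theorem stmt15_general (q qf : ℝ → Fin 4 → ℝ) (εq lammin lammax lamo : ℝ)
    (K : Matrix (Fin 3) (Fin 3) ℝ) (hKpd : K.PosDef)
    (hmin : ∀ v : Fin 3 → ℝ, lammin * (v ⬝ᵥ v) ≤ v ⬝ᵥ (K *ᵥ v))
    (hmax : ∀ v : Fin 3 → ℝ, v ⬝ᵥ (K *ᵥ v) ≤ lammax * (v ⬝ᵥ v))
    (hq : ∀ t, 0 ≤ t → ∑ i, q t i ^ 2 = 1)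
    (hqf : ∀ t, 0 ≤ t → Real.sqrt (∑ i, (qf t i - q t i) ^ 2) ≤ εq)
    (hlamo : lamo = lammin - lammax * εq) :
    ∀ t, 0 ≤ t → ∀ ξ : Fin 3 → ℝ,
      lamo * (ξ ⬝ᵥ ξ) ≤ ξ ⬝ᵥ ((K * (Jq (qf t))ᵀ * Jq (q t)) *ᵥ ξ) ∧
      ξ ⬝ᵥ ((-(1 / 2 : ℝ) • (K * (Jq (qf t))ᵀ * Jq (q t))) *ᵥ ξ) ≤ -(lamo / 2) * (ξ ⬝ᵥ ξ) := by
  intro t ht ξ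
  have hsum (x : Fin 4 → ℝ) : ∑ i, x i ^ 2 = x ⬝ᵥ x := by simp [dotProduct, sq]
  have hbound : lamo * (ξ ⬝ᵥ ξ) ≤ ξ ⬝ᵥ (K * (Jq (qf t))ᵀ * Jq (q t)) *ᵥ ξ := by
    rw [hlamo]
    refine le_dotProduct_mul_Jq_transpose_mul_Jq_mulVec hKpd.posSemidef hmin hmax ?_ ?_ ξ
    · rw [← hsum]; exact hq t ht
    · simpa only [← hsum, Pi.sub_apply] using hqf t ht
  refine ⟨hbound, ?_⟩
  rw [smul_mulVec, dotProduct_smul, smul_eq_mul]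
  linarith

theorem stmt15 (q qf : ℝ → Fin 4 → ℝ) (εq lammin lammax lamo : ℝ) (hεq : 0 < εq)
    (K : Matrix (Fin 3) (Fin 3) ℝ) (hKs : K.IsSymm) (hKpd : K.PosDef)
    (hmin : ∀ v : Fin 3 → ℝ, lammin * (v ⬝ᵥ v) ≤ v ⬝ᵥ (K *ᵥ v))
    (hmax : ∀ v : Fin 3 → ℝ, v ⬝ᵥ (K *ᵥ v) ≤ lammax * (v ⬝ᵥ v))
    (hq : ∀ t, 0 ≤ t → ∑ i, q t i ^ 2 = 1)
    (hqf : ∀ t, 0 ≤ t → Real.sqrt (∑ i, (qf t i - q t i) ^ 2) ≤ εq)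
    (hlamo : lamo = lammin - lammax * εq) (hpos : 0 < lamo) :
    ∀ t, 0 ≤ t → ∀ ξ : Fin 3 → ℝ,
      lamo * (ξ ⬝ᵥ ξ) ≤ ξ ⬝ᵥ ((K * (Jq (qf t))ᵀ * Jq (q t)) *ᵥ ξ) ∧
      ξ ⬝ᵥ ((-(1 / 2 : ℝ) • (K * (Jq (qf t))ᵀ * Jq (q t))) *ᵥ ξ) ≤ -(lamo / 2) * (ξ ⬝ᵥ ξ) :=
  stmt15_general q qf εq lammin lammax lamo K hKpd hmin hmax hq hqf hlamo
end
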